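/- For all natural numbers n, a, b with b \le n and n+b even, the coefficient of z^n u^a y^b in the formal power series expansion of 1/(1 - u - z(1/y + y/u)) (as a series in z with Laurent coefficients in u, y) equals \binom{n}{(b+n)/2} \binom{(b+n)/2 + n + a}{n}; the coefficient is zero when n+b is odd or when a < -n or |b| > n. -/

import Mathlib

/-- The coefficient ring: Laurent series in `u` whose coefficients are Laurent
series in `y`, over `ℚ`. -/
abbrev L13 : Type := LaurentSeries (LaurentSeries ℚ)

noncomputable def u13 : L13 := HahnSeries.single (1 : ℤ) 1
noncomputable def ubar13 : L13 := HahnSeries.single (-1 : ℤ) 1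
noncomputable def y13 : L13 := HahnSeries.C (HahnSeries.single (1 : ℤ) (1 : ℚ))
noncomputable def ybar13 : L13 := HahnSeries.C (HahnSeries.single (-1 : ℤ) (1 : ℚ))

/-! ### Auxiliary material -/

/-- The target coefficient function. -/
noncomputable def tC13 (n : ℕ) (a b : ℤ) : ℚ :=
  ∑ k ∈ Finset.range (n + 1),
    if b = 2 * (k : ℤ) - n ∧ -(k : ℤ) ≤ a then
      (n.choose k : ℚ) * (((a + k + n).toNat.choose n : ℚ)) else 0

lemma coeff_single_mul13 {R : Type*} [Ring R] (d : ℤ) (r : R) (S : HahnSeries ℤ R) (a : ℤ) :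
    (HahnSeries.single d r * S).coeff a = r * S.coeff (a - d) := by
  have h := HahnSeries.coeff_single_mul_add (r := r) (x := S) (a := a - d) (b := d)
  rwa [sub_add_cancel] at h

lemma u_mul_coeff13 (S : L13) (a : ℤ) : (u13 * S).coeff a = S.coeff (a - 1) := by
  rw [u13, coeff_single_mul13, one_mul]

lemma ybar_mul_coeff13 (S : L13) (a b : ℤ) :
    ((ybar13 * S).coeff a).coeff b = (S.coeff a).coeff (b + 1) := by
  rw [ybar13, HahnSeries.C_apply, coeff_single_mul13, sub_zero, coeff_single_mul13, one_mul]
  norm_num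

lemma yubar_mul_coeff13 (S : L13) (a b : ℤ) :
    ((y13 * ubar13 * S).coeff a).coeff b = (S.coeff (a + 1)).coeff (b - 1) := by
  rw [mul_assoc y13 ubar13 S, y13, HahnSeries.C_apply, coeff_single_mul13, sub_zero, ubar13,
    coeff_single_mul13, one_mul, coeff_single_mul13, one_mul]
  norm_num

lemma shift_zero13 (d : ℤ → ℚ) (hrec : ∀ a, d a - d (a - 1) = 0) (A : ℤ)
    (hA : ∀ a < A, d a = 0) (a : ℤ) : d a = 0 := by
  have step : ∀ m : ℕ, d a = d (a - m) := by
    intro m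
    induction m with
    | zero => simp
    | succ k ih =>
      have h1 := hrec (a - k)
      have h2 : (a - ((k : ℤ) + 1)) = (a - k) - 1 := by ring
      push_cast
      rw [h2]
      linarith
  obtain ⟨m, hm⟩ : ∃ m : ℕ, a - m < A := ⟨(a - A + 1).toNat, by omega⟩
  rw [step m]; exact hA _ hm

lemma tC13_vanish_a {n : ℕ} {a b : ℤ} (h : a < -(n : ℤ)) : tC13 n a b = 0 := by
  refine Finset.sum_eq_zero fun k hk => ?_
  rw [Finset.mem_range] at hk
  rw [if_neg]
  rintro ⟨-, h2⟩
  omega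

lemma tC13_vanish_parity {n : ℕ} {a b : ℤ} (h : ¬ (2 : ℤ) ∣ ((n : ℤ) + b)) : tC13 n a b = 0 := by
  refine Finset.sum_eq_zero fun k hk => ?_
  rw [if_neg]
  rintro ⟨h1, -⟩
  omega

lemma tC13_vanish_b {n : ℕ} {a b : ℤ} (h : (n : ℤ) < |b|) : tC13 n a b = 0 := by
  refine Finset.sum_eq_zero fun k hk => ?_
  rw [Finset.mem_range] at hk
  rw [if_neg]
  rintro ⟨h1, -⟩
  rcases abs_cases b with ⟨he, -⟩ | ⟨he, -⟩ <;> omega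

lemma tC13_zero (a b : ℤ) : tC13 0 a b = if b = 0 ∧ 0 ≤ a then 1 else 0 := by
  rw [tC13, Finset.sum_range_one]
  by_cases h : b = 0 ∧ 0 ≤ a
  · rw [if_pos (by push_cast; omega), if_pos h]
    norm_num
  · rw [if_neg (by push_cast; omega), if_neg h]

lemma tC13_rec0 (a b : ℤ) :
    tC13 0 a b - tC13 0 (a - 1) b = if a = 0 then (if b = 0 then (1 : ℚ) else 0) else 0 := by
  rw [tC13_zero, tC13_zero]
  split_ifs <;> first | omega | norm_num

lemma cast_choose_pascal13 (m n : ℕ) :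
    ((m + 1).choose (n + 1) : ℚ) - (m.choose (n + 1) : ℚ) = (m.choose n : ℚ) := by
  rw [Nat.choose_succ_succ]
  push_cast
  ring

lemma term13 (n j : ℕ) (a b : ℤ) :
    ((if b = 2 * (j:ℤ) - ((n+1 : ℕ):ℤ) ∧ -(j:ℤ) ≤ a then
        (((n+1).choose j : ℚ)) * (((a + j + ((n+1:ℕ):ℤ)).toNat.choose (n+1) : ℚ)) else 0)
      - (if b = 2 * (j:ℤ) - ((n+1 : ℕ):ℤ) ∧ -(j:ℤ) ≤ a - 1 then
        (((n+1).choose j : ℚ)) * ((((a-1) + j + ((n+1:ℕ):ℤ)).toNat.choose (n+1) : ℚ)) else 0))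
    = (if b + 1 = 2 * (j:ℤ) - (n:ℤ) ∧ -(j:ℤ) ≤ a then
        ((n.choose j : ℚ)) * (((a + j + (n:ℤ)).toNat.choose n : ℚ)) else 0)
      + (if j = 0 then 0 else
          if b - 1 = 2 * ((j:ℤ) - 1) - (n:ℤ) ∧ -((j:ℤ)-1) ≤ a + 1 then
            ((n.choose (j-1) : ℚ)) * ((((a+1) + ((j:ℤ)-1) + (n:ℤ)).toNat.choose n : ℚ)) else 0) := by
  by_cases hb : b = 2 * (j:ℤ) - ((n+1 : ℕ):ℤ)
  · rcases lt_trichotomy a (-(j : ℤ)) with hlt | heq | hgt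
    · rw [if_neg (by push_cast at *; omega), if_neg (by push_cast at *; omega),
        if_neg (by push_cast at *; omega), sub_zero]
      rcases Nat.eq_zero_or_pos j with hj0 | hj0
      · rw [if_pos hj0, add_zero]
      · rw [if_neg (by omega), if_neg (by push_cast at *; omega), add_zero]
    · -- a = -j
      rw [if_pos ⟨hb, by omega⟩, if_neg (by omega), sub_zero,
        if_pos ⟨by push_cast at *; omega, by omega⟩]
      have h1 : (a + (j:ℤ) + ((n+1 : ℕ):ℤ)).toNat = n + 1 := by push_cast at *; omega
      have h2 : (a + (j:ℤ) + (n:ℤ)).toNat = n := by push_cast at *; omega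
      rw [h1, h2, Nat.choose_self, Nat.choose_self, Nat.cast_one, mul_one, mul_one]
      rcases Nat.eq_zero_or_pos j with hj0 | hj0
      · subst hj0; rw [if_pos rfl, add_zero]; norm_num
      · obtain ⟨j', rfl⟩ : ∃ j', j = j' + 1 := ⟨j - 1, by omega⟩
        rw [if_neg (by omega), if_pos ⟨by push_cast at *; omega, by push_cast at *; omega⟩]
        have h3 : ((a+1) + (((j'+1 : ℕ):ℤ) - 1) + (n:ℤ)).toNat = n := by push_cast at *; omega
        rw [h3, Nat.choose_self, Nat.cast_one, mul_one, Nat.add_sub_cancel,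
          Nat.choose_succ_succ n j']
        push_cast
        ring
    · -- -j < a
      rw [if_pos ⟨hb, by omega⟩, if_pos ⟨hb, by omega⟩,
        if_pos ⟨by push_cast at *; omega, by omega⟩]
      have hmnn : (0:ℤ) ≤ a + (j:ℤ) + (n:ℤ) := by omega
      set m : ℕ := (a + (j:ℤ) + (n:ℤ)).toNat with hm
      have h1 : (a + (j:ℤ) + ((n+1 : ℕ):ℤ)).toNat = m + 1 := by push_cast at *; omega
      have h2 : ((a-1) + (j:ℤ) + ((n+1 : ℕ):ℤ)).toNat = m := by push_cast at *; omega
      rw [h1, h2, ← mul_sub, cast_choose_pascal13]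
      rcases Nat.eq_zero_or_pos j with hj0 | hj0
      · subst hj0; rw [if_pos rfl, add_zero]; norm_num
      · obtain ⟨j', rfl⟩ : ∃ j', j = j' + 1 := ⟨j - 1, by omega⟩
        rw [if_neg (by omega), if_pos ⟨by push_cast at *; omega, by push_cast at *; omega⟩]
        have h3 : ((a+1) + (((j'+1 : ℕ):ℤ) - 1) + (n:ℤ)).toNat = m := by push_cast at *; omega
        rw [h3, Nat.add_sub_cancel, Nat.choose_succ_succ n j']
        push_cast
        ring
  · rw [if_neg (by tauto), if_neg (by tauto), if_neg (by push_cast at *; omega), zero_add,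
      sub_zero]
    rcases Nat.eq_zero_or_pos j with hj0 | hj0
    · rw [if_pos hj0]
    · rw [if_neg (by omega), if_neg (by push_cast at *; omega)]

lemma tC13_rec (n : ℕ) (a b : ℤ) :
    tC13 (n + 1) a b - tC13 (n + 1) (a - 1) b = tC13 n a (b + 1) + tC13 n (a + 1) (b - 1) := by
  rw [tC13, tC13, ← Finset.sum_sub_distrib]
  have hsplit : ∀ j ∈ Finset.range (n + 1 + 1),
      ((if b = 2 * (j:ℤ) - ((n+1 : ℕ):ℤ) ∧ -(j:ℤ) ≤ a then
          (((n+1).choose j : ℚ)) * (((a + j + ((n+1:ℕ):ℤ)).toNat.choose (n+1) : ℚ)) else 0)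
        - (if b = 2 * (j:ℤ) - ((n+1 : ℕ):ℤ) ∧ -(j:ℤ) ≤ a - 1 then
          (((n+1).choose j : ℚ)) * ((((a-1) + j + ((n+1:ℕ):ℤ)).toNat.choose (n+1) : ℚ)) else 0))
      = (if b + 1 = 2 * (j:ℤ) - (n:ℤ) ∧ -(j:ℤ) ≤ a then
          ((n.choose j : ℚ)) * (((a + j + (n:ℤ)).toNat.choose n : ℚ)) else 0)
        + (if j = 0 then 0 else
            if b - 1 = 2 * ((j:ℤ) - 1) - (n:ℤ) ∧ -((j:ℤ)-1) ≤ a + 1 then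
              ((n.choose (j-1) : ℚ)) * ((((a+1) + ((j:ℤ)-1) + (n:ℤ)).toNat.choose n : ℚ)) else 0) :=
    fun j _ => term13 n j a b
  have hsum := Finset.sum_congr rfl hsplit
  rw [hsum]
  rw [Finset.sum_add_distrib]
  congr 1
  · rw [Finset.sum_range_succ, tC13]
    norm_num [Nat.choose_succ_self]
  · rw [Finset.sum_range_succ', tC13]
    simp only [Nat.succ_ne_zero, if_false, eq_self_iff_true, if_true, add_zero,
      Nat.add_sub_cancel, Nat.cast_add, Nat.cast_one, add_sub_cancel_right]

lemma main13 (F : PowerSeries L13)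
    (hF : (1 - PowerSeries.C u13 -
        PowerSeries.X * PowerSeries.C (ybar13 + y13 * ubar13)) * F = 1) :
    ∀ (n : ℕ) (a b : ℤ),
      ((PowerSeries.coeff n F).coeff a).coeff b = tC13 n a b := by
  set w : L13 := ybar13 + y13 * ubar13 with hw
  have expand : (1 - PowerSeries.C u13 - PowerSeries.X * PowerSeries.C w) * F
      = F - PowerSeries.C u13 * F - PowerSeries.X * (PowerSeries.C w * F) := by ring
  have hco : ∀ n : ℕ, (PowerSeries.coeff n) F - u13 * (PowerSeries.coeff n) F
      - (PowerSeries.coeff n) (PowerSeries.X * (PowerSeries.C w * F))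
      = (PowerSeries.coeff n) (1 : PowerSeries L13) := by
    intro n
    rw [← hF, expand, map_sub, map_sub, PowerSeries.coeff_C_mul]
  have e0 : (PowerSeries.coeff 0) F - u13 * (PowerSeries.coeff 0) F = 1 := by
    have h := hco 0
    rwa [PowerSeries.coeff_zero_X_mul, sub_zero, PowerSeries.coeff_one, if_pos rfl] at h
  have eS : ∀ n : ℕ, (PowerSeries.coeff (n + 1)) F
      - u13 * (PowerSeries.coeff (n + 1)) F = w * (PowerSeries.coeff n) F := by
    intro n
    have h := hco (n + 1)
    rw [PowerSeries.coeff_succ_X_mul, PowerSeries.coeff_C_mul, PowerSeries.coeff_one,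
      if_neg (Nat.succ_ne_zero n)] at h
    exact sub_eq_zero.mp h
  intro n
  induction n with
  | zero =>
    intro a b
    have hrec : ∀ a' : ℤ,
        ((((PowerSeries.coeff 0 F).coeff a').coeff b - tC13 0 a' b)
          - (((PowerSeries.coeff 0 F).coeff (a' - 1)).coeff b - tC13 0 (a' - 1) b)) = 0 := by
      intro a'
      have h1 := congrArg (fun S : L13 => (S.coeff a').coeff b) e0
      simp only [HahnSeries.coeff_sub, u_mul_coeff13, HahnSeries.coeff_one] at h1
      have h2 : (((PowerSeries.coeff 0) F).coeff a').coeff b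
          - (((PowerSeries.coeff 0) F).coeff (a' - 1)).coeff b
          = if a' = 0 then (if b = 0 then (1 : ℚ) else 0) else 0 := by
        rw [h1]
        split_ifs with h h' <;> simp [HahnSeries.coeff_one, *]
      have h3 := tC13_rec0 a' b
      linarith
    refine sub_eq_zero.mp (shift_zero13 _ hrec (min ((PowerSeries.coeff 0 F).order) 0)
      (fun a' ha' => ?_) a)
    have hc : (PowerSeries.coeff 0 F).coeff a' = 0 :=
      HahnSeries.coeff_eq_zero_of_lt_order (lt_of_lt_of_le ha' (min_le_left _ _))
    have ht : tC13 0 a' b = 0 :=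
      tC13_vanish_a (by have := lt_of_lt_of_le ha' (min_le_right _ _); push_cast; omega)
    rw [hc, ht]
    simp
  | succ n ih =>
    intro a b
    have hrec : ∀ a' : ℤ,
        ((((PowerSeries.coeff (n + 1) F).coeff a').coeff b - tC13 (n + 1) a' b)
          - (((PowerSeries.coeff (n + 1) F).coeff (a' - 1)).coeff b
              - tC13 (n + 1) (a' - 1) b)) = 0 := by
      intro a'
      have h1 := congrArg (fun S : L13 => (S.coeff a').coeff b) (eS n)
      simp only [HahnSeries.coeff_sub, u_mul_coeff13] at h1
      have hwc : ((w * (PowerSeries.coeff n) F).coeff a').coeff b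
          = ((PowerSeries.coeff n F).coeff a').coeff (b + 1)
            + ((PowerSeries.coeff n F).coeff (a' + 1)).coeff (b - 1) := by
        have hsplitw : w * (PowerSeries.coeff n) F
            = ybar13 * (PowerSeries.coeff n) F
              + y13 * ubar13 * (PowerSeries.coeff n) F := by rw [hw]; ring
        rw [hsplitw, HahnSeries.coeff_add, HahnSeries.coeff_add,
          ybar_mul_coeff13, yubar_mul_coeff13]
      rw [hwc, ih a' (b + 1), ih (a' + 1) (b - 1)] at h1
      have h3 := tC13_rec n a' b
      linarith
    refine sub_eq_zero.mp (shift_zero13 _ hrec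
      (min ((PowerSeries.coeff (n + 1) F).order) (-((n : ℤ) + 1))) (fun a' ha' => ?_) a)
    have hc : (PowerSeries.coeff (n + 1) F).coeff a' = 0 :=
      HahnSeries.coeff_eq_zero_of_lt_order (lt_of_lt_of_le ha' (min_le_left _ _))
    have ht : tC13 (n + 1) a' b = 0 :=
      tC13_vanish_a (by have := lt_of_lt_of_le ha' (min_le_right _ _); push_cast; omega)
    rw [hc, ht]
    simp

/-- Coefficient extraction in the expansion of `1/(1 - u - z(1/y + y/u))` as a
power series in `z` with Laurent coefficients in `u` and `y`:  the coefficient of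
`z^n u^a y^b` equals `C(n,(b+n)/2)·C((b+n)/2+n+a, n)` when `b ≤ n` and `n + b` is
even, and it vanishes when `n+b` is odd, or `a < -n`, or `|b| > n`. -/
theorem expansion_coeffs (F : PowerSeries L13)
    (hF : (1 - PowerSeries.C u13 -
        PowerSeries.X * PowerSeries.C (ybar13 + y13 * ubar13)) * F = 1) :
    (∀ n a b : ℕ, b ≤ n → 2 ∣ n + b →
      ((PowerSeries.coeff n F).coeff (a : ℤ)).coeff (b : ℤ) =
        ((Nat.choose n ((b + n) / 2) : ℚ) *
          (Nat.choose ((b + n) / 2 + n + a) n : ℚ))) ∧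
    (∀ (n : ℕ) (a b : ℤ),
      (¬ (2 : ℤ) ∣ ((n : ℤ) + b) ∨ a < -(n : ℤ) ∨ (n : ℤ) < |b|) →
      ((PowerSeries.coeff n F).coeff a).coeff b = 0) := by
  have hm := main13 F hF
  constructor
  · intro n a b hbn hdvd
    rw [hm, tC13]
    set k0 : ℕ := (b + n) / 2 with hk0
    have hk0n : k0 ≤ n := by omega
    rw [Finset.sum_eq_single_of_mem k0 (Finset.mem_range.2 (by omega))]
    · rw [if_pos ⟨by push_cast; omega, by push_cast; omega⟩]
      have ht : (((a : ℤ) + k0 + n).toNat) = k0 + n + a := by omega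
      rw [ht]
    · intro k hk hkne
      rw [if_neg]
      rintro ⟨h1, -⟩
      omega
  · intro n a b hcase
    rw [hm]
    rcases hcase with h | h | h
    · exact tC13_vanish_parity h
    · exact tC13_vanish_a h
    · exact tC13_vanish_b h
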